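/- arXiv:2305.05037 — 2 statements merged into one kernel-verified Lean document; each statement's English description precedes it below -/
import Mathlib

section
/- The isometry group of the rank-3 lattice with Gram matrix [[6,3,0],[3,6,0],[0,0,6]] has order 24 and contains no element of order 4. -/
/-!
A lattice vector `(x, y, z)` has norm `6` iff `x² + xy + y² + z² = 1`, whose only solutions are the
six roots `±e₁, ±e₂, ±(e₁ - e₂)` of the `A₂(3)` summand and `±e₃`. An isometry maps the basis
to such vectors, so its columns lie among these eight, and among the `8³` candidate matrices
exactly 24 are isometries (the dihedral group of order 12 on `A₂(3)` times `±1` on `e₃`); a direct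
check shows that none of them has order 4.
-/

open Matrix

/-- The Gram matrix of the invariant lattice `S^{G₀}(X)`. -/
def Gram : Matrix (Fin 3) (Fin 3) ℤ := !![6, 3, 0; 3, 6, 0; 0, 0, 6]

def gramShortVectors : Finset (Fin 3 → ℤ) :=
  {![1, 0, 0], ![-1, 0, 0], ![0, 1, 0], ![0, -1, 0], ![1, -1, 0], ![-1, 1, 0],
    ![0, 0, 1], ![0, 0, -1]}

def gramIsometries : Finset (Matrix (Fin 3) (Fin 3) ℤ) :=
  ((Fintype.piFinset fun _ => gramShortVectors).map ⟨transpose, transpose_injective⟩).filter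
    fun M => Mᵀ * Gram * M = Gram

lemma mem_gramShortVectors_of_dotProduct_mulVec {v : Fin 3 → ℤ} (hv : v ⬝ᵥ Gram *ᵥ v = 6) :
    v ∈ gramShortVectors := by
  obtain ⟨x, y, z, rfl⟩ : ∃ x y z, v = ![x, y, z] :=
    ⟨v 0, v 1, v 2, by ext i; fin_cases i <;> rfl⟩
  have hq : x * x + x * y + y * y + z * z = 1 := by
    simp only [dotProduct, mulVec, Gram, of_apply, cons_val', cons_val_fin_one, Fin.sum_univ_three,
      cons_val_zero, cons_val_one, cons_val, zero_mul, add_zero, zero_add] at hv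
    linarith
  have hx : -1 ≤ x ∧ x ≤ 1 := by constructor <;> nlinarith [sq_nonneg (x + 2 * y), sq_nonneg z]
  have hy : -1 ≤ y ∧ y ≤ 1 := by constructor <;> nlinarith [sq_nonneg (2 * x + y), sq_nonneg z]
  have hz : -1 ≤ z ∧ z ≤ 1 := by constructor <;> nlinarith [sq_nonneg (x + y), sq_nonneg x, sq_nonneg y]
  obtain ⟨hx₁, hx₂⟩ := hx
  obtain ⟨hy₁, hy₂⟩ := hy
  obtain ⟨hz₁, hz₂⟩ := hz
  interval_cases x <;> interval_cases y <;> interval_cases z <;> first | decide | omega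

lemma transpose_mem_piFinset_gramShortVectors {M : Matrix (Fin 3) (Fin 3) ℤ}
    (hM : Mᵀ * Gram * M = Gram) : Mᵀ ∈ Fintype.piFinset fun _ => gramShortVectors :=
  Fintype.mem_piFinset.2 fun j => mem_gramShortVectors_of_dotProduct_mulVec <| by
    rw [← mul_mul_apply, hM]
    fin_cases j <;> rfl

lemma mem_gramIsometries_iff {M : Matrix (Fin 3) (Fin 3) ℤ} :
    M ∈ gramIsometries ↔ Mᵀ * Gram * M = Gram := by
  refine ⟨fun hM => (Finset.mem_filter.1 hM).2, fun hM => Finset.mem_filter.2 ⟨?_, hM⟩⟩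
  exact Finset.mem_map.2 ⟨Mᵀ, transpose_mem_piFinset_gramShortVectors hM, transpose_transpose M⟩

lemma card_gramIsometries : gramIsometries.card = 24 := by
  decide

lemma sq_eq_one_of_pow_four_eq_one_of_mem_gramIsometries :
    ∀ M ∈ gramIsometries, M ^ 4 = 1 → M ^ 2 = 1 := by
  decide

theorem stmt_14 :
    Nat.card {M : Matrix (Fin 3) (Fin 3) ℤ // Mᵀ * Gram * M = Gram} = 24 ∧
    ¬ ∃ M : Matrix (Fin 3) (Fin 3) ℤ,
        Mᵀ * Gram * M = Gram ∧ M ^ 4 = 1 ∧ M ^ 2 ≠ 1 := by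
  constructor
  · simp_rw [← mem_gramIsometries_iff]
    rw [Nat.card_eq_fintype_card, Fintype.card_coe, card_gramIsometries]
  · rintro ⟨M, hM, hM4, hM2⟩
    exact hM2 <| sq_eq_one_of_pow_four_eq_one_of_mem_gramIsometries M
      (mem_gramIsometries_iff.2 hM) hM4
end

section
/- Let M be an even lattice and T ⊆ M an even sublattice of finite index. Then the subgroup H = M/T of the discriminant group A_T = T∨/T is isotropic, i.e. the induced quadratic form q_T : A_T → ℚ/2ℤ vanishes on H. Conversely, for every isotropic subgroup H ⊆ A_T, the preimage π⁻¹(H) ⊆ T∨ under the quotient map π : T∨ → A_T is an even overlattice of T, and these two constructions are mutually inverse bijections between finite-index even overlattices of T and isotropic subgroups of A_T. -/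
open LinearMap

/-!
An even overlattice `M ⊇ T` is integral by polarization,
`B v t = (B (v + t) (v + t) - B v v - B t t) / 2 ∈ ℤ` for `v ∈ M`, `t ∈ T`, hence `M ⊆ T∨`.
Overlattices of `T` inside `T∨` correspond to submodules of `T∨/T` by the correspondence
theorem for the quotient map `π`, and `M` is even exactly when `q_T` vanishes on `π(M)`.
Finite index is automatic: `T∨` is finitely generated and every vector of `V` has a nonzero
integer multiple in `T`, so `A_T` is finite.
-/

namespace Submodule

variable {R V : Type*} [Ring R] [AddCommGroup V] [Module R V] {T D M : Submodule R V}

def quotientImage (T D M : Submodule R V) : Submodule R (D ⧸ T.comap D.subtype) :=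
  (M.comap D.subtype).map (T.comap D.subtype).mkQ

def quotientPreimage (T D : Submodule R V) (H : Submodule R (D ⧸ T.comap D.subtype)) :
    Submodule R V :=
  (H.comap (T.comap D.subtype).mkQ).map D.subtype

theorem comap_mkQ_quotientImage (hTM : T ≤ M) :
    (quotientImage T D M).comap (T.comap D.subtype).mkQ = M.comap D.subtype := by
  rw [quotientImage, comap_map_mkQ, sup_eq_right.mpr (comap_mono hTM)]

theorem quotientPreimage_quotientImage (hTM : T ≤ M) (hMD : M ≤ D) :
    quotientPreimage T D (quotientImage T D M) = M := by
  rw [quotientPreimage, comap_mkQ_quotientImage hTM, map_comap_subtype, inf_eq_right.mpr hMD]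

theorem quotientImage_quotientPreimage (H : Submodule R (D ⧸ T.comap D.subtype)) :
    quotientImage T D (quotientPreimage T D H) = H := by
  rw [quotientImage, quotientPreimage, comap_map_eq, ker_subtype, sup_bot_eq, map_comap_eq,
    range_mkQ, top_inf_eq]

theorem le_quotientPreimage (hTD : T ≤ D) (H : Submodule R (D ⧸ T.comap D.subtype)) :
    T ≤ quotientPreimage T D H :=
  calc T = (T.comap D.subtype).map D.subtype := by rw [map_comap_subtype, inf_eq_right.mpr hTD]
    _ ≤ quotientPreimage T D H := map_mono ((ker_mkQ _).symm.le.trans (comap_mono bot_le))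

theorem quotientPreimage_le (H : Submodule R (D ⧸ T.comap D.subtype)) :
    quotientPreimage T D H ≤ D :=
  map_subtype_le _ _

theorem finite_quotient_comap_of_le (hMD : M ≤ D) [Finite (D ⧸ T.comap D.subtype)] :
    Finite (M ⧸ T.comap M.subtype) := by
  have hle : T.comap M.subtype ≤ (T.comap D.subtype).comap (inclusion hMD) := by
    rw [← comap_comp, subtype_comp_inclusion]
  have hker : ker ((T.comap M.subtype).mapQ _ _ hle) = ⊥ := by
    rw [ker_mapQ, ← comap_comp, subtype_comp_inclusion, mkQ_map_self]
  exact Finite.of_injective _ (LinearMap.ker_eq_bot.mp hker)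
end Submodule

section Rational

variable {V : Type*} [AddCommGroup V] [Module ℚ V]

theorem Submodule.exists_zsmul_mem_of_mem_span_rat (T : Submodule ℤ V) {v : V}
    (hv : v ∈ Submodule.span ℚ (T : Set V)) :
    ∃ n : ℤ, n ≠ 0 ∧ n • v ∈ T := by
  induction hv using Submodule.span_induction with
  | mem x hx => exact ⟨1, one_ne_zero, by simpa using hx⟩
  | zero => exact ⟨1, one_ne_zero, by simp⟩
  | add x y _ _ hx hy =>
    obtain ⟨m, hm, hmx⟩ := hx
    obtain ⟨n, hn, hny⟩ := hy
    refine ⟨m * n, mul_ne_zero hm hn, ?_⟩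
    rw [smul_add, mul_comm m n, mul_smul, mul_comm n m, mul_smul]
    exact T.add_mem (T.smul_mem n hmx) (T.smul_mem m hny)
  | smul q x _ hx =>
    obtain ⟨n, hn, hnx⟩ := hx
    refine ⟨q.den * n, mul_ne_zero (by exact_mod_cast q.den_ne_zero) hn, ?_⟩
    have : (q.den * n : ℤ) • q • x = q.num • n • x := by
      simp only [← Int.cast_smul_eq_zsmul ℚ, smul_smul]
      congr 1
      push_cast
      rw [← Rat.mul_den_eq_num]
      ring
    rw [this]
    exact T.smul_mem _ hnx

namespace LinearMap.BilinForm

variable (B : LinearMap.BilinForm ℚ V)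

theorem le_dualSubmodule_of_integral {N T : Submodule ℤ V}
    (hint : ∀ v ∈ N, ∀ w ∈ T, ∃ m : ℤ, B v w = (m : ℚ)) : N ≤ B.dualSubmodule T := by
  intro v hv w hw
  obtain ⟨m, hm⟩ := hint v hv w hw
  exact Submodule.mem_one.mpr ⟨m, by simpa using hm.symm⟩

theorem integral_of_even (hsymm : B.IsSymm) {M : Submodule ℤ V}
    (heven : ∀ v ∈ M, ∃ m : ℤ, B v v = 2 * (m : ℚ)) :
    ∀ v ∈ M, ∀ w ∈ M, ∃ m : ℤ, B v w = (m : ℚ) := by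
  intro v hv w hw
  obtain ⟨a, ha⟩ := heven v hv
  obtain ⟨b, hb⟩ := heven w hw
  obtain ⟨c, hc⟩ := heven (v + w) (M.add_mem hv hw)
  have hpolar : B (v + w) (v + w) = B v v + 2 * B v w + B w w := by
    simp only [map_add, LinearMap.add_apply, hsymm.eq w v]; ring
  exact ⟨c - a - b, by push_cast; linarith⟩

theorem le_dualSubmodule_of_even (hsymm : B.IsSymm) {T M : Submodule ℤ V} (hTM : T ≤ M)
    (heven : ∀ v ∈ M, ∃ m : ℤ, B v v = 2 * (m : ℚ)) : M ≤ B.dualSubmodule T :=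
  B.le_dualSubmodule_of_integral fun v hv w hw =>
    B.integral_of_even hsymm heven v hv w (hTM hw)

theorem dualSubmodule_fg [FiniteDimensional ℚ V] {T : Submodule ℤ V} (hnd : B.Nondegenerate)
    (hspan : Submodule.span ℚ (T : Set V) = ⊤) : (B.dualSubmodule T).FG := by
  classical
  let b := Module.Basis.ofSpan hspan.ge
  have := Module.Finite.finite_basis b
  have hbT : Submodule.span ℤ (Set.range b) ≤ T :=
    Submodule.span_le.mpr (Module.Basis.ofSpan_subset _)
  have hle : B.dualSubmodule T ≤ Submodule.span ℤ (Set.range (B.dualBasis hnd b)) := by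
    rw [← B.dualSubmodule_span_of_basis hnd b]
    exact fun x hx y hy => hx y (hbT hy)
  exact (Submodule.fg_span (Set.finite_range _)).of_le hle

theorem finite_quotient_dualSubmodule [FiniteDimensional ℚ V] {T : Submodule ℤ V}
    (hnd : B.Nondegenerate) (hspan : Submodule.span ℚ (T : Set V) = ⊤) :
    Finite (B.dualSubmodule T ⧸ T.comap (B.dualSubmodule T).subtype) := by
  have : Module.Finite ℤ (B.dualSubmodule T) :=
    Module.Finite.iff_fg.mpr (B.dualSubmodule_fg hnd hspan)
  refine Module.finite_of_fg_torsion _ fun x => ?_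
  obtain ⟨d, rfl⟩ := Submodule.mkQ_surjective _ x
  obtain ⟨n, hn, hnT⟩ :=
    T.exists_zsmul_mem_of_mem_span_rat (hspan ▸ Submodule.mem_top : (d : V) ∈ _)
  refine ⟨⟨n, mem_nonZeroDivisors_of_ne_zero hn⟩, ?_⟩
  rw [Submonoid.smul_def, ← map_smul, Submodule.mkQ_apply, Submodule.Quotient.mk_eq_zero]
  exact hnT

end LinearMap.BilinForm

end Rational

theorem stmt_19_general {V : Type*} [AddCommGroup V] [Module ℚ V] [FiniteDimensional ℚ V]
    (B : LinearMap.BilinForm ℚ V) (hsymm : B.IsSymm) (hnd : B.Nondegenerate)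
    (T : Submodule ℤ V) (hspan : Submodule.span ℚ (T : Set V) = ⊤)
    (hint : ∀ v ∈ T, ∀ w ∈ T, ∃ m : ℤ, B v w = (m : ℚ))
    -- the dual lattice `T∨`
    (D : Submodule ℤ V) (hD : D = B.dualSubmodule T)
    -- the quotient map `π : T∨ → A_T = T∨/T`
    (π : D →ₗ[ℤ] (D ⧸ T.comap D.subtype)) (hπ : π = (T.comap D.subtype).mkQ) :
    ∃ e : {M : Submodule ℤ V //
            -- `M` is a finite-index even overlattice of `T`:
            T ≤ M ∧ Finite (M ⧸ T.comap M.subtype) ∧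
              (∀ v ∈ M, ∃ m : ℤ, B v v = 2 * (m : ℚ))} ≃
          {H : Submodule ℤ (D ⧸ T.comap D.subtype) //
            -- `H` is an isotropic subgroup of `A_T`:
            ∀ x : D, π x ∈ H → ∃ m : ℤ, B x x = 2 * (m : ℚ)},
      -- `e` sends `M` to the subgroup `M/T ⊆ A_T`:
      (∀ M, ((e M : Submodule ℤ (D ⧸ T.comap D.subtype)) : Set _) =
          π '' {x : D | (x : V) ∈ (M : Submodule ℤ V)}) ∧
      -- the inverse of `e` sends `H` to `π⁻¹(H)`:
      (∀ H, ((e.symm H : Submodule ℤ V) : Set V) =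
          Subtype.val '' (π ⁻¹' (H : Submodule ℤ (D ⧸ T.comap D.subtype)))) := by
  subst hπ
  have hTD : T ≤ D := hD ▸ B.le_dualSubmodule_of_integral hint
  have : Finite (D ⧸ T.comap D.subtype) := hD ▸ B.finite_quotient_dualSubmodule hnd hspan
  refine ⟨{ toFun := fun M => ⟨Submodule.quotientImage T D M.1, fun x hx => ?_⟩
            invFun := fun H => ⟨Submodule.quotientPreimage T D H.1,
              Submodule.le_quotientPreimage hTD H.1,
              Submodule.finite_quotient_comap_of_le (Submodule.quotientPreimage_le H.1), ?_⟩
            left_inv := fun M => Subtype.ext <| Submodule.quotientPreimage_quotientImage M.2.1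
              (hD ▸ B.le_dualSubmodule_of_even hsymm M.2.1 M.2.2.2)
            right_inv := fun H => Subtype.ext (Submodule.quotientImage_quotientPreimage H.1) },
    fun _ => rfl, fun _ => rfl⟩
  · rw [← Submodule.mem_comap, Submodule.comap_mkQ_quotientImage M.2.1] at hx
    exact M.2.2.2 x hx
  · rintro _ ⟨x, hx, rfl⟩
    exact H.2 x hx

/-- **Nikulin's correspondence between even overlattices and isotropic subgroups.**

Let `T` be an even nondegenerate lattice, realized as a full-rank `ℤ`-submodule
of a finite-dimensional rational vector space `V` carrying a symmetric
nondegenerate bilinear form `B` which is integral and even on `T`.  Let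
`D = T∨` be the dual lattice, `A_T = T∨/T` the discriminant group with quotient
map `π : T∨ → A_T`.  A subgroup `H ⊆ A_T` is isotropic iff the induced
quadratic form `q_T : A_T → ℚ/2ℤ` vanishes on `H`, i.e. iff `B x x ∈ 2ℤ` for
every `x ∈ π⁻¹(H)`.

Then there is a bijection `e` between finite-index even overlattices `M` of `T`
and isotropic subgroups `H ⊆ A_T`, where `e` sends `M` to `π(M ∩ T∨) = M/T`
and its inverse sends `H` to `π⁻¹(H)`; so the two constructions are mutually
inverse. -/
theorem stmt_19 {V : Type*} [AddCommGroup V] [Module ℚ V] [FiniteDimensional ℚ V]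
    (B : LinearMap.BilinForm ℚ V) (hsymm : B.IsSymm) (hnd : B.Nondegenerate)
    (T : Submodule ℤ V) (hspan : Submodule.span ℚ (T : Set V) = ⊤)
    (hint : ∀ v ∈ T, ∀ w ∈ T, ∃ m : ℤ, B v w = (m : ℚ))
    (heven : ∀ v ∈ T, ∃ m : ℤ, B v v = 2 * (m : ℚ))
    -- the dual lattice `T∨`
    (D : Submodule ℤ V) (hD : D = B.dualSubmodule T)
    -- the quotient map `π : T∨ → A_T = T∨/T`
    (π : D →ₗ[ℤ] (D ⧸ T.comap D.subtype)) (hπ : π = (T.comap D.subtype).mkQ) :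
    ∃ e : {M : Submodule ℤ V //
            -- `M` is a finite-index even overlattice of `T`:
            T ≤ M ∧ Finite (M ⧸ T.comap M.subtype) ∧
              (∀ v ∈ M, ∃ m : ℤ, B v v = 2 * (m : ℚ))} ≃
          {H : Submodule ℤ (D ⧸ T.comap D.subtype) //
            -- `H` is an isotropic subgroup of `A_T`:
            ∀ x : D, π x ∈ H → ∃ m : ℤ, B x x = 2 * (m : ℚ)},
      -- `e` sends `M` to the subgroup `M/T ⊆ A_T`:
      (∀ M, ((e M : Submodule ℤ (D ⧸ T.comap D.subtype)) : Set _) =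
          π '' {x : D | (x : V) ∈ (M : Submodule ℤ V)}) ∧
      -- the inverse of `e` sends `H` to `π⁻¹(H)`:
      (∀ H, ((e.symm H : Submodule ℤ V) : Set V) =
          Subtype.val '' (π ⁻¹' (H : Submodule ℤ (D ⧸ T.comap D.subtype)))) :=
  stmt_19_general B hsymm hnd T hspan hint D hD π hπ
end
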